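/- If the basic interval I_n(ε_1,…,ε_n) is full, then for any β-admissible word (η_1,…,η_m), the length of the concatenated basic interval satisfies |I_{n+m}(ε_1,…,ε_n,η_1,…,η_m)| = |I_n(ε_1,…,ε_n)| · |I_m(η_1,…,η_m)|. -/
import Mathlib


open Filter MeasureTheory Set

/-- The β-transformation T_β(x) = βx − ⌊βx⌋. -/
noncomputable def betaT (β : ℝ) : ℝ → ℝ := fun x => β * x - ⌊β * x⌋

/-- The (i+1)-th digit of the β-expansion of x (0-indexed). -/
noncomputable def betaDigit (β x : ℝ) (i : ℕ) : ℤ := ⌊β * (betaT β)^[i] x⌋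

/-- A finite word is β-admissible if some x ∈ [0,1) has β-expansion beginning with it. -/
def IsAdmissibleWord (β : ℝ) (w : List ℤ) : Prop :=
  ∃ x ∈ Set.Ico (0:ℝ) 1, ∀ i (h : i < w.length), w.get ⟨i, h⟩ = betaDigit β x i

/-- An infinite sequence is β-admissible if it is the digit sequence of some x ∈ [0,1). -/
def IsAdmissibleSeq (β : ℝ) (e : ℕ → ℤ) : Prop :=
  ∃ x ∈ Set.Ico (0:ℝ) 1, ∀ i, e i = betaDigit β x i

/-- The basic interval (cylinder) of a word. -/
def cylinder (β : ℝ) (w : List ℤ) : Set ℝ :=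
  {x | x ∈ Set.Ico (0:ℝ) 1 ∧ ∀ i (h : i < w.length), betaDigit β x i = w.get ⟨i, h⟩}

/-- A basic interval is full if its length is β^{-n}. -/
def IsFull (β : ℝ) (w : List ℤ) : Prop :=
  volume (cylinder β w) = ENNReal.ofReal (1 / β ^ w.length)

-- The infinite β-expansion of 1: the periodic modification if the expansion of 1
-- terminates, and the expansion of 1 itself otherwise (0-indexed).
open Classical in
noncomputable def betaStar (β : ℝ) : ℕ → ℤ :=
  if h : ∃ n, betaDigit β 1 n ≠ 0 ∧ ∀ i, n < i → betaDigit β 1 i = 0 then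
    fun i =>
      if i % (h.choose + 1) = h.choose then betaDigit β 1 h.choose - 1
      else betaDigit β 1 (i % (h.choose + 1))
  else betaDigit β 1

/-- Strict lexicographic order on integer sequences. -/
def lexLt (a b : ℕ → ℤ) : Prop := ∃ n, (∀ i, i < n → a i = b i) ∧ a n < b n

/-- l_n(β): the length of the longest run of zeros following the n-th digit
(1-indexed position n) in the infinite β-expansion of 1. -/
noncomputable def zeroRunLen (β : ℝ) (n : ℕ) : ℕ∞ :=
  ⨆ k ∈ {k : ℕ | ∀ j, j < k → betaStar β (n + j) = 0}, (k : ℕ∞)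

/-- A₀: the set of bases β > 1 with bounded zero-runs in the expansion of 1. -/
def A0 : Set ℝ := {β | 1 < β ∧ ∃ C : ℕ, ∀ n, 1 ≤ n → zeroRunLen β n ≤ (C : ℕ∞)}

/-- The waiting time W_n^β(x,y): first k ≥ 1 with T_β^k x in the n-th basic interval of y. -/
noncomputable def waitingTime (β x y : ℝ) (n : ℕ) : ℕ∞ :=
  sInf {k : ℕ∞ | ∃ m : ℕ, k = (m : ℕ∞) ∧ 1 ≤ m ∧
    ∀ i, i < n → betaDigit β ((betaT β)^[m] x) i = betaDigit β y i}

/-- (log W_n^β(x,y)) / n as an extended real, with value ⊤ when W_n = ∞. -/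
noncomputable def waitingRatio (β x y : ℝ) (n : ℕ) : EReal :=
  if h : waitingTime β x y n = ⊤ then ⊤
  else (((Real.log ((waitingTime β x y n).untop h : ℕ)) / n : ℝ) : EReal)

lemma betaT_mem_Ico (β x : ℝ) : betaT β x ∈ Set.Ico (0:ℝ) 1 := by
  have : betaT β x = Int.fract (β * x) := rfl
  rw [this]
  exact ⟨Int.fract_nonneg _, Int.fract_lt_one _⟩

lemma iter_mem_Ico (β : ℝ) {x : ℝ} (hx : x ∈ Set.Ico (0:ℝ) 1) (n : ℕ) :
    (betaT β)^[n] x ∈ Set.Ico (0:ℝ) 1 := by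
  cases n with
  | zero => simpa using hx
  | succ n => rw [Function.iterate_succ_apply']; exact betaT_mem_Ico β _

lemma beta_expand (β : ℝ) (hβ : β ≠ 0) (x : ℝ) (n : ℕ) :
    x = (∑ i ∈ Finset.range n, (betaDigit β x i : ℝ) / β ^ (i+1)) + (betaT β)^[n] x / β ^ n := by
  induction n with
  | zero => simp
  | succ n ih =>
    rw [Finset.sum_range_succ]
    have h1 : (betaT β)^[n+1] x = β * (betaT β)^[n] x - ⌊β * (betaT β)^[n] x⌋ := by
      rw [Function.iterate_succ_apply']; rfl
    have h2 : ((betaDigit β x n : ℤ) : ℝ) = (⌊β * (betaT β)^[n] x⌋ : ℝ) := rfl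
    have key : (betaT β)^[n] x / β ^ n
        = (betaDigit β x n : ℝ) / β ^ (n+1) + (betaT β)^[n+1] x / β ^ (n+1) := by
      rw [h1, h2]
      field_simp
      ring
    conv_lhs => rw [ih]
    rw [key]; ring

lemma betaDigit_shift (β x : ℝ) (n i : ℕ) :
    betaDigit β x (n + i) = betaDigit β ((betaT β)^[n] x) i := by
  unfold betaDigit
  rw [add_comm, Function.iterate_add_apply]

lemma measurable_betaT (β : ℝ) : Measurable (betaT β) := by
  have : betaT β = fun x => Int.fract (β * x) := rfl
  rw [this]
  exact measurable_fract.comp (measurable_const_mul β)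

lemma measurable_betaDigit (β : ℝ) (i : ℕ) : Measurable (fun x => betaDigit β x i) :=
  ((measurable_const_mul β).comp ((measurable_betaT β).iterate i)).floor

lemma measurableSet_cylinder (β : ℝ) (w : List ℤ) : MeasurableSet (_root_.cylinder β w) := by
  have : _root_.cylinder β w
      = Set.Ico (0:ℝ) 1 ∩ ⋂ i : Fin w.length, {x | betaDigit β x i = w.get i} := by
    ext x
    simp only [_root_.cylinder, Set.mem_setOf_eq, Set.mem_inter_iff, Set.mem_iInter]
    constructor
    · rintro ⟨h1, h2⟩; exact ⟨h1, fun i => h2 i i.2⟩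
    · rintro ⟨h1, h2⟩; exact ⟨h1, fun i hi => h2 ⟨i, hi⟩⟩
  rw [this]
  refine measurableSet_Ico.inter (MeasurableSet.iInter fun i => ?_)
  have := (measurable_betaDigit β i) (measurableSet_singleton (w.get i))
  simpa [Set.preimage, Set.mem_singleton_iff] using this

noncomputable def cval (β : ℝ) (w : List ℤ) : ℝ :=
  ∑ i ∈ Finset.range w.length, ((w.getD i 0 : ℤ) : ℝ) / β ^ (i+1)

lemma cylinder_iter (β : ℝ) (hβ : β ≠ 0) (w : List ℤ) {x : ℝ} (hx : x ∈ _root_.cylinder β w) :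
    (betaT β)^[w.length] x = β ^ w.length * (x - cval β w) := by
  have hexp := beta_expand β hβ x w.length
  have hsum : ∑ i ∈ Finset.range w.length, (betaDigit β x i : ℝ) / β ^ (i+1) = cval β w := by
    refine Finset.sum_congr rfl fun i hi => ?_
    have hi' : i < w.length := Finset.mem_range.1 hi
    rw [hx.2 i hi']
    congr 2
    rw [List.getD_eq_getElem _ _ hi']
    rfl
  rw [hsum] at hexp
  have hbn : (β : ℝ) ^ w.length ≠ 0 := pow_ne_zero _ hβ
  field_simp at hexp ⊢
  linarith

/-- If I_n(ε₁,…,εₙ) is full then the length of the concatenated cylinder is the product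
of the lengths. -/
theorem full_concat_length (β : ℝ) (hβ : 1 < β) (w η : List ℤ)
    (hw : IsAdmissibleWord β w) (hfull : IsFull β w) (hη : IsAdmissibleWord β η) :
    volume (cylinder β (w ++ η)) = volume (cylinder β w) * volume (cylinder β η) := by
  have hβ0 : (0:ℝ) < β := lt_trans one_pos hβ
  have hβne : β ≠ 0 := ne_of_gt hβ0
  set n := w.length with hn
  set c := cval β w with hc
  have hbn : (0:ℝ) < β ^ n := pow_pos hβ0 n
  set S := (fun x : ℝ => β ^ n * (x - c)) ⁻¹' _root_.cylinder β η with hS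
  -- set equality
  have hset : _root_.cylinder β (w ++ η) = _root_.cylinder β w ∩ S := by
    ext x
    constructor
    · intro hx
      have hxw : x ∈ _root_.cylinder β w := by
        refine ⟨hx.1, fun i hi => ?_⟩
        have hi2 : i < (w ++ η).length := by simp; omega
        rw [hx.2 i hi2]
        simp only [List.get_eq_getElem]
        exact List.getElem_append_left hi
      refine ⟨hxw, ?_⟩
      have hT := cylinder_iter β hβne w hxw
      show β ^ n * (x - c) ∈ _root_.cylinder β η
      rw [show β ^ n * (x - c) = (betaT β)^[n] x from hT.symm]
      refine ⟨iter_mem_Ico β hx.1 n, fun i hi => ?_⟩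
      rw [← betaDigit_shift]
      have hi2 : n + i < (w ++ η).length := by simp [hn]; omega
      rw [hx.2 (n+i) hi2]
      simp only [List.get_eq_getElem]
      rw [List.getElem_append_right (by omega)]
      congr 1
      omega
    · rintro ⟨hxw, hxs⟩
      have hT := cylinder_iter β hβne w hxw
      have hxs' : β ^ n * (x - c) ∈ _root_.cylinder β η := hxs
      rw [show β ^ n * (x - c) = (betaT β)^[n] x from hT.symm] at hxs'
      refine ⟨hxw.1, fun i hi => ?_⟩
      simp only [List.get_eq_getElem]
      rcases lt_or_ge i n with h | h
      · rw [List.getElem_append_left h]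
        exact hxw.2 i h
      · rw [List.getElem_append_right (by omega)]
        have hlen : i - n < η.length := by
          simp [hn] at hi; omega
        have := hxs'.2 (i - n) hlen
        rw [← betaDigit_shift] at this
        have hni : n + (i - n) = i := by omega
        rw [hni] at this
        rw [this]
        rfl
  -- subsets of the interval
  have hsub : _root_.cylinder β w ⊆ Set.Ico c (c + 1/β^n) := by
    intro x hx
    have hT := cylinder_iter β hβne w hx
    have hmem := iter_mem_Ico β hx.1 n
    rw [← hn, ← hc] at hT
    rw [hT] at hmem
    obtain ⟨h1, h2⟩ := hmem
    constructor
    · nlinarith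
    · have : x - c < 1/β^n := by
        rw [lt_div_iff₀ hbn, mul_comm]; linarith
      linarith
  have hSsub : S ⊆ Set.Ico c (c + 1/β^n) := by
    intro x hx
    have hmem : β^n*(x-c) ∈ Set.Ico (0:ℝ) 1 := hx.1
    obtain ⟨h1, h2⟩ := hmem
    constructor
    · nlinarith
    · have : x - c < 1/β^n := by
        rw [lt_div_iff₀ hbn, mul_comm]; linarith
      linarith
  have hIvol : volume (Set.Ico c (c + 1/β^n)) = ENNReal.ofReal (1/β^n) := by
    rw [Real.volume_Ico, add_sub_cancel_left]
  have hfull' : volume (_root_.cylinder β w) = ENNReal.ofReal (1/β^n) := hfull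
  have hnull : volume (Set.Ico c (c + 1/β^n) \ _root_.cylinder β w) = 0 := by
    rw [measure_diff hsub (measurableSet_cylinder β w).nullMeasurableSet
      (by rw [hfull']; exact ENNReal.ofReal_ne_top), hfull', hIvol, tsub_self]
  have haeeq : _root_.cylinder β w =ᵐ[volume] Set.Ico c (c + 1/β^n) := by
    rw [MeasureTheory.ae_eq_set]
    refine ⟨?_, hnull⟩
    rw [Set.diff_eq_empty.2 hsub, measure_empty]
  have h1 : volume (_root_.cylinder β (w++η)) = volume (Set.Ico c (c + 1/β^n) ∩ S) := by
    rw [hset]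
    exact measure_congr (MeasureTheory.ae_eq_set_inter haeeq (Filter.EventuallyEq.refl _ _))
  have h2 : Set.Ico c (c + 1/β^n) ∩ S = S := Set.inter_eq_self_of_subset_right hSsub
  have h3 : volume S = ENNReal.ofReal (1/β^n) * volume (_root_.cylinder β η) := by
    have hrw : S = (fun x : ℝ => β^n * x) ⁻¹' ((fun x : ℝ => x + (-(β^n*c))) ⁻¹' _root_.cylinder β η) := by
      ext x
      simp only [hS, Set.mem_preimage]
      rw [show β^n * (x - c) = β^n * x + -(β^n * c) by ring]
    rw [hrw, Real.volume_preimage_mul_left (ne_of_gt hbn), measure_preimage_add_right]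
    congr 1
    rw [abs_inv, abs_of_pos hbn, one_div]
  rw [h1, h2, h3, hfull']
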